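/- Define ψ : ℝ → ℝ by ψ(x) := 2 arctan(tanh(x)) and β : ℝ → ℝ by β(x) := 4 sech(2x) = 8/(e^{2x} + e^{−2x}). Then the functions u₊(z,x) := e^{iψ(x)} and u₋(z,x) := e^{−iψ(x)}, which do not depend on z, are solutions of the one-dimensional quadratic nonlinear Schrödinger equation i ∂_z u + ∂²_{xx} u + β(x) u² = 0 on (0,∞) × ℝ; moreover |u₊(z,x)| = |u₋(z,x)| = 1 for all (z,x) ∈ (0,∞) × ℝ, while their initial conditions f₊(x) = e^{iψ(x)} and f₋(x) = e^{−iψ(x)} are distinct functions. -/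

import Mathlib

noncomputable section

open Set

/-- `ψ(x) = 2 arctan (tanh x)`. -/
def psiGordon (x : ℝ) : ℝ := 2 * Real.arctan (Real.tanh x)

/-- `β(x) = 4 sech (2x) = 8 / (e^{2x} + e^{-2x})`. -/
def betaGordon (x : ℝ) : ℝ := 8 / (Real.exp (2 * x) + Real.exp (-(2 * x)))

/-- `u₊(z,x) = e^{iψ(x)}` (independent of `z`). -/
def uplusGordon (_z : ℝ) (x : ℝ) : ℂ := Complex.exp (Complex.I * (psiGordon x : ℂ))

/-- `u₋(z,x) = e^{-iψ(x)}` (independent of `z`). -/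
def uminusGordon (_z : ℝ) (x : ℝ) : ℂ := Complex.exp (-(Complex.I * (psiGordon x : ℂ)))

/-!
Up to the factor `2`, `ψ` is the Gudermannian function: `ψ x = arctan (sinh (2x))`. Hence
`cos ψ = sech (2x) = β / 4`, `sin ψ = tanh (2x)` and `ψ' = 2 sech (2x) = β / 2`, so
`ψ'' = -β tanh (2x)`. For `c = ±i` the stationary field `u = e^{cψ}` satisfies
`u'' + β u² = (c ψ'' - ψ'² + β e^{cψ}) u`, and the bracket vanishes because
`e^{cψ} = β / 4 + c tanh (2x)`. Both fields have modulus one as `ψ` is real, and they differ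
wherever `tanh (2x) ≠ 0`.
-/

open Real

theorem deriv_deriv_cexp_mul {φ φ' φ'' : ℝ → ℂ} (c : ℂ)
    (hφ : ∀ x, HasDerivAt φ (φ' x) x) (hφ' : ∀ x, HasDerivAt φ' (φ'' x) x) (x : ℝ) :
    deriv (deriv fun y => Complex.exp (c * φ y)) x
      = (c * φ'' x + (c * φ' x) ^ 2) * Complex.exp (c * φ x) := by
  have hfirst :
      deriv (fun y => Complex.exp (c * φ y)) = fun y => c * φ' y * Complex.exp (c * φ y) :=
    funext fun y => (((hφ y).const_mul c).cexp).deriv.trans (mul_comm _ _)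
  rw [hfirst]
  exact (((hφ' x).const_mul c).mul ((hφ x).const_mul c).cexp).deriv.trans (by ring)

theorem Complex.exp_mul_eq_cos_add_mul_sin {c : ℂ} (hc : c = I ∨ c = -I) (t : ℂ) :
    Complex.exp (c * t) = Complex.cos t + c * Complex.sin t := by
  rcases hc with rfl | rfl
  · rw [mul_comm, Complex.exp_mul_I, mul_comm]
  · rw [neg_mul, ← mul_neg, mul_comm, Complex.exp_mul_I, Complex.cos_neg, Complex.sin_neg]
    ring

namespace Real

theorem sqrt_one_add_sinh_sq (y : ℝ) : √(1 + sinh y ^ 2) = cosh y := by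
  rw [add_comm, ← cosh_sq, sqrt_sq (cosh_pos y).le]

theorem cos_arctan_sinh (y : ℝ) : cos (arctan (sinh y)) = 1 / cosh y := by
  rw [cos_arctan, sqrt_one_add_sinh_sq]

theorem sin_arctan_sinh (y : ℝ) : sin (arctan (sinh y)) = sinh y / cosh y := by
  rw [sin_arctan, sqrt_one_add_sinh_sq]

theorem hasDerivAt_arctan_sinh (y : ℝ) :
    HasDerivAt (fun t => arctan (sinh t)) (1 / cosh y) y := by
  convert (hasDerivAt_sinh y).arctan using 1
  rw [add_comm, ← cosh_sq]
  field_simp [(cosh_pos y).ne']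

end Real

theorem psiGordon_eq_arctan_sinh (x : ℝ) : psiGordon x = arctan (sinh (2 * x)) := by
  rw [psiGordon, two_mul_arctan (neg_one_lt_tanh x) (tanh_lt_one x), tanh_eq_sinh_div_cosh,
    sinh_two_mul]
  congr 1
  field_simp
  linear_combination (-sinh x) * cosh_sq x

theorem betaGordon_eq (x : ℝ) : betaGordon x = 4 / cosh (2 * x) := by
  rw [betaGordon, cosh_eq]
  field_simp
  ring

theorem hasDerivAt_psiGordon (x : ℝ) : HasDerivAt psiGordon (2 / cosh (2 * x)) x := by
  rw [funext psiGordon_eq_arctan_sinh]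
  exact ((hasDerivAt_arctan_sinh (2 * x)).comp x ((hasDerivAt_id' x).const_mul 2)).congr_deriv
    (by ring)

theorem hasDerivAt_two_div_cosh_two_mul (x : ℝ) :
    HasDerivAt (fun t => 2 / cosh (2 * t)) (-4 * sinh (2 * x) / cosh (2 * x) ^ 2) x :=
  ((hasDerivAt_const x 2).div ((hasDerivAt_id' x).const_mul 2).cosh
    (cosh_pos _).ne').congr_deriv (by ring)

theorem cexp_mul_psiGordon {c : ℂ} (hc : c = Complex.I ∨ c = -Complex.I) (x : ℝ) :
    Complex.exp (c * psiGordon x) = (1 + c * sinh (2 * x)) / cosh (2 * x) := by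
  rw [Complex.exp_mul_eq_cos_add_mul_sin hc, ← Complex.ofReal_cos, ← Complex.ofReal_sin,
    psiGordon_eq_arctan_sinh, cos_arctan_sinh, sin_arctan_sinh]
  push_cast
  ring

theorem deriv_deriv_cexp_mul_psiGordon_add_betaGordon_mul_sq {c : ℂ}
    (hc : c = Complex.I ∨ c = -Complex.I) (x : ℝ) :
    deriv (deriv fun y => Complex.exp (c * psiGordon y)) x
      + betaGordon x * Complex.exp (c * psiGordon x) ^ 2 = 0 := by
  have hc_sq : c ^ 2 = -1 := by rcases hc with rfl | rfl <;> simp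
  have hcosh : (cosh (2 * x) : ℂ) ≠ 0 := by exact_mod_cast (cosh_pos _).ne'
  rw [deriv_deriv_cexp_mul c (fun y => (hasDerivAt_psiGordon y).ofReal_comp)
    (fun y => (hasDerivAt_two_div_cosh_two_mul y).ofReal_comp), cexp_mul_psiGordon hc,
    betaGordon_eq]
  simp only [Complex.ofReal_div, Complex.ofReal_mul, Complex.ofReal_neg, Complex.ofReal_pow,
    Complex.ofReal_ofNat]
  field_simp
  linear_combination (4 + 4 * c * sinh (2 * x)) * hc_sq

theorem QNLS_nonuniqueness_one_dimensional :
    (∀ z ∈ Ioi (0 : ℝ), ∀ x : ℝ,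
      Complex.I * deriv (fun t => uplusGordon t x) z
        + deriv (deriv (uplusGordon z)) x
        + (betaGordon x : ℂ) * (uplusGordon z x) ^ 2 = 0) ∧
    (∀ z ∈ Ioi (0 : ℝ), ∀ x : ℝ,
      Complex.I * deriv (fun t => uminusGordon t x) z
        + deriv (deriv (uminusGordon z)) x
        + (betaGordon x : ℂ) * (uminusGordon z x) ^ 2 = 0) ∧
    (∀ z ∈ Ioi (0 : ℝ), ∀ x : ℝ,
      ‖uplusGordon z x‖ = 1 ∧ ‖uminusGordon z x‖ = 1) ∧
    (fun x : ℝ => uplusGordon 0 x) ≠ (fun x : ℝ => uminusGordon 0 x) := by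
  refine ⟨fun z _ x => ?_, fun z _ x => ?_, fun z _ x => ?_, fun h => ?_⟩
  · rw [show (fun t => uplusGordon t x) = fun _ => uplusGordon z x from rfl, deriv_const,
      mul_zero, zero_add]
    exact deriv_deriv_cexp_mul_psiGordon_add_betaGordon_mul_sq (.inl rfl) x
  · have huminus : uminusGordon z = fun y => Complex.exp (-Complex.I * psiGordon y) :=
      funext fun y => congrArg Complex.exp (neg_mul _ _).symm
    rw [show (fun t => uminusGordon t x) = fun _ => uminusGordon z x from rfl, deriv_const,
      mul_zero, zero_add, huminus]
    exact deriv_deriv_cexp_mul_psiGordon_add_betaGordon_mul_sq (.inr rfl) x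
  · simp [uplusGordon, uminusGordon, Complex.norm_exp]
  · have h1 := congrFun h 1
    simp only [uplusGordon, uminusGordon, ← neg_mul] at h1
    rw [cexp_mul_psiGordon (.inl rfl), cexp_mul_psiGordon (.inr rfl),
      div_left_inj' (by exact_mod_cast (cosh_pos _).ne')] at h1
    have hsinh : (sinh (2 * 1) : ℂ) = 0 := by
      linear_combination (-Complex.I / 2) * h1 + sinh (2 * 1) * Complex.I_sq
    exact (sinh_pos_iff.2 (by norm_num : (0 : ℝ) < 2 * 1)).ne' (by exact_mod_cast hsinh)
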